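/- Let a, c be odd natural numbers with a, c ≥ 3, let b be a positive odd natural number, and let d be a positive even natural number with a^b ≠ c^d. Then v₂(a^b − c^d) ≥ min(v₂(a−1), max(v₂(c+1), v₂(c−1)) + v₂(d)) (the difference a^b − c^d being taken in ℤ). -/

import Mathlib

/-!
Write `m` for the right-hand side. Since `a - 1 ∣ a ^ b - 1`, the power `2 ^ m` divides
`a ^ b - 1`. For `c ^ d - 1` the lifting-the-exponent lemma for `p = 2` gives
`v₂(c ^ d - 1) = v₂(c + 1) + v₂(c - 1) + v₂(d) - 1`, and of the two consecutive even numbers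
`c - 1, c + 1` one is `2 mod 4`, so this equals `max (v₂(c + 1)) (v₂(c - 1)) + v₂(d) ≥ m`.
Hence `2 ^ m` divides `(a ^ b - 1) - (c ^ d - 1) = a ^ b - c ^ d`, which is nonzero.
-/

lemma min_padicValNat_two_add_one_sub_one {c : ℕ} (hc : Odd c) (hc1 : 1 < c) :
    min (padicValNat 2 (c + 1)) (padicValNat 2 (c - 1)) = 1 := by
  obtain ⟨k, rfl⟩ := hc
  have hk : k ≠ 0 := by omega
  rw [show 2 * k + 1 + 1 = 2 * (k + 1) by ring, show 2 * k + 1 - 1 = 2 * k by omega,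
    padicValNat.mul two_ne_zero (by omega : k + 1 ≠ 0), padicValNat.mul two_ne_zero hk,
    padicValNat_self]
  have hmin : min (padicValNat 2 (k + 1)) (padicValNat 2 k) = 0 := by
    rcases Nat.even_or_odd k with hev | hodd
    · simp [padicValNat.eq_zero_of_not_dvd hev.add_one.not_two_dvd_nat]
    · simp [padicValNat.eq_zero_of_not_dvd hodd.not_two_dvd_nat]
  omega

lemma padicValNat_two_pow_sub_one_of_even {c d : ℕ} (hc : Odd c) (hc1 : 1 < c)
    (hd : Even d) (hd0 : d ≠ 0) :
    padicValNat 2 (c ^ d - 1) =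
      max (padicValNat 2 (c + 1)) (padicValNat 2 (c - 1)) + padicValNat 2 d := by
  have hlte := padicValNat.pow_two_sub_pow hc1 (Nat.Odd.sub_odd hc odd_one).two_dvd
    hc.not_two_dvd_nat hd0 hd
  have hmin := min_padicValNat_two_add_one_sub_one hc hc1
  rw [one_pow] at hlte
  omega

lemma pow_padicValNat_sub_one_dvd (p : ℕ) {n : ℕ} (hn : 1 ≤ n) :
    (p : ℤ) ^ padicValNat p (n - 1) ∣ (n : ℤ) - 1 := by
  rw [show (n : ℤ) - 1 = ((n - 1 : ℕ) : ℤ) by omega]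
  exact_mod_cast pow_padicValNat_dvd

theorem stmt_11_general (a c b d : ℕ) (ha : Odd a) (hc : Odd c) (hc3 : 3 ≤ c)
    (hd : Even d) (hd0 : 0 < d)
    (hne : a ^ b ≠ c ^ d) :
    padicValInt 2 ((a : ℤ) ^ b - (c : ℤ) ^ d) ≥
      min (padicValNat 2 (a - 1))
        (max (padicValNat 2 (c + 1)) (padicValNat 2 (c - 1)) + padicValNat 2 d) := by
  set m := min (padicValNat 2 (a - 1))
    (max (padicValNat 2 (c + 1)) (padicValNat 2 (c - 1)) + padicValNat 2 d)
  have hab : (2 : ℤ) ^ m ∣ (a : ℤ) ^ b - 1 :=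
    calc (2 : ℤ) ^ m ∣ 2 ^ padicValNat 2 (a - 1) := pow_dvd_pow 2 (min_le_left _ _)
      _ ∣ (a : ℤ) - 1 := mod_cast pow_padicValNat_sub_one_dvd 2 ha.pos
      _ ∣ (a : ℤ) ^ b - 1 := by simpa using sub_dvd_pow_sub_pow (a : ℤ) 1 b
  have hcd : (2 : ℤ) ^ m ∣ (c : ℤ) ^ d - 1 := by
    refine (pow_dvd_pow 2 (min_le_right _ _)).trans ?_
    rw [← padicValNat_two_pow_sub_one_of_even hc (by omega) hd hd0.ne']
    exact_mod_cast pow_padicValNat_sub_one_dvd 2 (Nat.one_le_pow _ _ (by omega))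
  have hdiff : (2 : ℤ) ^ m ∣ (a : ℤ) ^ b - (c : ℤ) ^ d := by
    simpa using dvd_sub hab hcd
  have hne' : (a : ℤ) ^ b - (c : ℤ) ^ d ≠ 0 := sub_ne_zero.mpr (mod_cast hne)
  exact ((padicValInt_dvd_iff m _).mp (mod_cast hdiff)).resolve_left hne'

theorem stmt_11 (a c b d : ℕ) (ha : Odd a) (hc : Odd c) (ha3 : 3 ≤ a) (hc3 : 3 ≤ c)
    (hb : Odd b) (hb0 : 0 < b) (hd : Even d) (hd0 : 0 < d)
    (hne : a ^ b ≠ c ^ d) :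
    padicValInt 2 ((a : ℤ) ^ b - (c : ℤ) ^ d) ≥
      min (padicValNat 2 (a - 1))
        (max (padicValNat 2 (c + 1)) (padicValNat 2 (c - 1)) + padicValNat 2 d) :=
  stmt_11_general a c b d ha hc hc3 hd hd0 hne
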